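/- Let r_CC, r_CD, r_DC, r_DD be reals with r_DC > r_CC > r_DD > r_CD, and 0 < γ < 1. Then there exists exactly one Q-table Q : S × A → ℝ satisfying, for all s ∈ S and a1 ∈ A, Q(s,a1) = (1/2)·(r_{a1 C} + γ·max_a Q((a1,C),a)) + (1/2)·(r_{a1 D} + γ·max_a Q((a1,D),a)); this unique solution is constant in the state coordinate, given by Q(s,D) = (r_DD + r_DC)/(2(1−γ)) and Q(s,C) = (r_CD + r_CC)/2 + γ·(r_DD + r_DC)/(2(1−γ)), and it satisfies Q(s,D) > Q(s,C) for every state s, i.e., its greedy policy is always-defect. -/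

import Mathlib

/-!
Against a uniformly random opponent the successor state of `(s, a₁)` is `(a₁, C)` or `(a₁, D)`
whatever `s` is, so the right-hand side of the Bellman equation does not depend on `s` and every
solution is constant in the state. Both actions then share the continuation value
`γ · max (Q C) (Q D)`, so `Q D - Q C` is the difference of the mean immediate rewards, which is
positive because `D` strictly dominates `C`. Hence the maximum is `Q D`, and the equation for `D`
becomes the scalar equation `Q D = m_D + γ · Q D`, `m_D` the mean reward of `D`.
-/

inductive Act | C | D
deriving DecidableEq

open Act

abbrev State := Act × Act

open Function

lemma Act.forall {p : Act → Prop} : (∀ a, p a) ↔ p C ∧ p D :=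
  ⟨fun h => ⟨h C, h D⟩, fun ⟨hC, hD⟩ a => by cases a <;> assumption⟩

section Scalar

variable {a b γ x y : ℝ}

lemma add_mul_div_one_sub_lt_div_one_sub (hab : a < b) (hγ : γ ≠ 1) :
    a + γ * (b / (1 - γ)) < b / (1 - γ) := by
  have h1γ : 1 - γ ≠ 0 := sub_ne_zero.mpr hγ.symm
  have : b / (1 - γ) - γ * (b / (1 - γ)) = b := by field_simp
  linarith

/-- The Bellman equation of a two-action problem whose actions share the continuation value. -/
lemma eq_add_mul_max_iff (hab : a < b) (hγ : γ ≠ 1) :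
    (x = a + γ * max x y ∧ y = b + γ * max x y) ↔
      (x = a + γ * (b / (1 - γ)) ∧ y = b / (1 - γ)) := by
  have h1γ : 1 - γ ≠ 0 := sub_ne_zero.mpr hγ.symm
  constructor
  · rintro ⟨hx, hy⟩
    have hxy : x ≤ y := by linarith
    rw [max_eq_right hxy] at hx hy
    have hy' : y = b / (1 - γ) := by
      rw [eq_div_iff h1γ]
      linear_combination hy
    exact ⟨hy' ▸ hx, hy'⟩
  · rintro ⟨hx, hy⟩
    subst hx hy
    rw [max_eq_right (add_mul_div_one_sub_lt_div_one_sub hab hγ).le]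
    exact ⟨rfl, by field_simp; ring⟩

end Scalar

noncomputable section

variable (r : Act → Act → ℝ) (γ : ℝ)

def randomOpponentBellman (Q : State → Act → ℝ) : State → Act → ℝ :=
  fun _ a1 => (1 / 2) * (r a1 C + γ * max (Q (a1, C) C) (Q (a1, C) D))
    + (1 / 2) * (r a1 D + γ * max (Q (a1, D) C) (Q (a1, D) D))

def meanReward (a : Act) : ℝ := (r a C + r a D) / 2

def randomOpponentQ : Act → ℝ
  | C => meanReward r C + γ * (meanReward r D / (1 - γ))
  | D => meanReward r D / (1 - γ)

lemma randomOpponentBellman_const (q : Act → ℝ) (s : State) (a : Act) :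
    randomOpponentBellman r γ (fun _ => q) s a = meanReward r a + γ * max (q C) (q D) := by
  simp only [randomOpponentBellman, meanReward]
  ring

variable {r γ}

lemma eq_const_of_isFixedPt_randomOpponentBellman {Q : State → Act → ℝ}
    (hQ : IsFixedPt (randomOpponentBellman r γ) Q) : Q = fun _ => Q (C, C) := by
  rw [← hQ]
  rfl

lemma isFixedPt_randomOpponentBellman_iff (hr : meanReward r C < meanReward r D) (hγ : γ ≠ 1)
    {Q : State → Act → ℝ} :
    IsFixedPt (randomOpponentBellman r γ) Q ↔ Q = fun _ => randomOpponentQ r γ := by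
  have hconst : ∀ q : Act → ℝ,
      IsFixedPt (randomOpponentBellman r γ) (fun _ => q) ↔ q = randomOpponentQ r γ := by
    intro q
    have : Nonempty State := ⟨(C, C)⟩
    simp only [IsFixedPt, funext_iff, randomOpponentBellman_const, forall_const, Act.forall]
    rw [eq_comm (a := meanReward r C + _), eq_comm (a := meanReward r D + _),
      eq_add_mul_max_iff hr hγ]
    rfl
  constructor
  · intro hQ
    have hQconst := eq_const_of_isFixedPt_randomOpponentBellman hQ
    rw [hQconst] at hQ
    rw [hQconst, (hconst _).1 hQ]
  · rintro rfl
    exact (hconst _).2 rfl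

lemma randomOpponentQ_C_lt_D (hr : meanReward r C < meanReward r D) (hγ : γ ≠ 1) :
    randomOpponentQ r γ C < randomOpponentQ r γ D :=
  add_mul_div_one_sub_lt_div_one_sub hr hγ

end

theorem random_opponent_unique_fixed_point_general
    (rCC rCD rDC rDD : ℝ)
    (h1 : rDC > rCC) (h3 : rDD > rCD)
    (r : Act → Act → ℝ)
    (hrCC : r C C = rCC) (hrCD : r C D = rCD)
    (hrDC : r D C = rDC) (hrDD : r D D = rDD)
    (γ : ℝ) (hγ1 : γ < 1) :
    (∃! Q : State → Act → ℝ, ∀ (s : State) (a1 : Act),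
        Q s a1 = (1 / 2) * (r a1 C + γ * max (Q (a1, C) C) (Q (a1, C) D))
          + (1 / 2) * (r a1 D + γ * max (Q (a1, D) C) (Q (a1, D) D)))
    ∧ ∀ Q : State → Act → ℝ,
        (∀ (s : State) (a1 : Act),
          Q s a1 = (1 / 2) * (r a1 C + γ * max (Q (a1, C) C) (Q (a1, C) D))
            + (1 / 2) * (r a1 D + γ * max (Q (a1, D) C) (Q (a1, D) D))) →
        ∀ s : State,
          Q s D = (rDD + rDC) / (2 * (1 - γ)) ∧
          Q s C = (rCD + rCC) / 2 + γ * (rDD + rDC) / (2 * (1 - γ)) ∧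
          Q s D > Q s C := by
  have hr : meanReward r C < meanReward r D := by
    simp only [meanReward, hrCC, hrCD, hrDC, hrDD]
    linarith
  have h1γ : 1 - γ ≠ 0 := by linarith
  have hfix : ∀ Q : State → Act → ℝ,
      (∀ s a1, Q s a1 = randomOpponentBellman r γ Q s a1) ↔ Q = fun _ => randomOpponentQ r γ :=
    fun Q => Iff.trans
      ⟨fun h => funext₂ fun s a => (h s a).symm, fun h s a => (congrFun₂ h s a).symm⟩
      (isFixedPt_randomOpponentBellman_iff hr hγ1.ne)
  refine ⟨⟨_, (hfix _).2 rfl, fun Q hQ => (hfix Q).1 hQ⟩, fun Q hQ s => ?_⟩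
  rw [(hfix Q).1 hQ]
  refine ⟨?_, ?_, randomOpponentQ_C_lt_D hr hγ1.ne⟩ <;>
  · simp only [randomOpponentQ, meanReward, hrCC, hrCD, hrDC, hrDD]
    field_simp
    ring

/-- against a uniformly random opponent (ε = 1/2), the self-play
Bellman equation has exactly one solution; it is constant in the state, given by the
stated formulas, and its greedy policy is always-defect. -/
theorem random_opponent_unique_fixed_point
    (rCC rCD rDC rDD : ℝ)
    (h1 : rDC > rCC) (h2 : rCC > rDD) (h3 : rDD > rCD)
    (r : Act → Act → ℝ)
    (hrCC : r C C = rCC) (hrCD : r C D = rCD)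
    (hrDC : r D C = rDC) (hrDD : r D D = rDD)
    (γ : ℝ) (hγ0 : 0 < γ) (hγ1 : γ < 1) :
    (∃! Q : State → Act → ℝ, ∀ (s : State) (a1 : Act),
        Q s a1 = (1 / 2) * (r a1 C + γ * max (Q (a1, C) C) (Q (a1, C) D))
          + (1 / 2) * (r a1 D + γ * max (Q (a1, D) C) (Q (a1, D) D)))
    ∧ ∀ Q : State → Act → ℝ,
        (∀ (s : State) (a1 : Act),
          Q s a1 = (1 / 2) * (r a1 C + γ * max (Q (a1, C) C) (Q (a1, C) D))
            + (1 / 2) * (r a1 D + γ * max (Q (a1, D) C) (Q (a1, D) D))) →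
        ∀ s : State,
          Q s D = (rDD + rDC) / (2 * (1 - γ)) ∧
          Q s C = (rCD + rCC) / 2 + γ * (rDD + rDC) / (2 * (1 - γ)) ∧
          Q s D > Q s C :=
  random_opponent_unique_fixed_point_general rCC rCD rDC rDD h1 h3 r hrCC hrCD hrDC hrDD γ hγ1
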